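/- arXiv:math/0603534 — 6 statements merged into one kernel-verified Lean document; each statement's English description precedes it below -/
import Mathlib

section
/- Let F(y) = log(1 + 1/y) - 1/y and define H(y) = -1/(4y²) for y ≥ 1 and H(y) = -1/(2y) + 1/4 for 0 < y ≤ 1. Then for all y > 0, -1/(2y²) < F(y) < H(y). -/
/-!
Put `x = 1/y`, so that `F y = log (1 + x) - x`. The lower bound is the Padé bound
`2x/(x+2) < log (1 + x)`. For `x ≤ 1`, the upper bound follows from `u < sinh u` at `u = log (1 + x)`;
for `x ≥ 1`, from `log (1 + x) ≤ log 2 + (x - 1)/2` and `log 2 < 3/4`.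
-/

namespace Real

variable {x : ℝ}

lemma log_lt_sub_inv_div_two {t : ℝ} (ht : 1 < t) : log t < (t - t⁻¹) / 2 := by
  rw [← sinh_log (by linarith)]
  exact self_lt_sinh_iff.mpr (log_pos ht)

lemma sub_sq_div_two_lt_log_one_add (hx : 0 < x) : x - x ^ 2 / 2 < log (1 + x) := by
  refine lt_of_le_of_lt ?_ (lt_log_one_add_of_pos hx)
  rw [le_div_iff₀ (by linarith)]
  nlinarith [pow_pos hx 3]

lemma log_one_add_lt_sub_sq_div_four (hx : 0 < x) (hx1 : x ≤ 1) :
    log (1 + x) < x - x ^ 2 / 4 := by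
  refine (log_lt_sub_inv_div_two (by linarith)).trans_le ?_
  have hx1' : 0 < 1 + x := by linarith
  rw [div_le_iff₀ two_pos, ← sub_nonneg]
  have key : (x - x ^ 2 / 4) * 2 - (1 + x - (1 + x)⁻¹) = x ^ 2 * (1 - x) / (2 * (1 + x)) := by
    field_simp
    ring
  rw [key]
  have : 0 ≤ 1 - x := by linarith
  positivity

lemma log_one_add_lt_half_add_quarter (hx : 1 ≤ x) : log (1 + x) < x / 2 + 1 / 4 := by
  have hsplit : log (1 + x) = log 2 + log ((1 + x) / 2) := by
    rw [← log_mul two_ne_zero (by positivity)]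
    ring_nf
  have hhalf := log_le_sub_one_of_pos (x := (1 + x) / 2) (by positivity)
  linarith [log_two_lt_d9]

end Real

theorem F_bounds
    (F H : ℝ → ℝ)
    (hF : ∀ y : ℝ, 0 < y → F y = Real.log (1 + 1/y) - 1/y)
    (hH1 : ∀ y : ℝ, 1 ≤ y → H y = -1/(4*y^2))
    (hH2 : ∀ y : ℝ, 0 < y → y ≤ 1 → H y = -1/(2*y) + 1/4) :
    ∀ y : ℝ, 0 < y → -1/(2*y^2) < F y ∧ F y < H y := by
  intro y hy
  have hx : 0 < 1 / y := by positivity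
  have hsq : -1 / (2 * y ^ 2) = -(1 / y) ^ 2 / 2 := by ring
  rw [hF y hy]
  refine ⟨by linarith [Real.sub_sq_div_two_lt_log_one_add hx], ?_⟩
  rcases le_total 1 y with hy1 | hy1
  · have hsq' : -1 / (4 * y ^ 2) = -(1 / y) ^ 2 / 4 := by ring
    rw [hH1 y hy1]
    linarith [Real.log_one_add_lt_sub_sq_div_four hx ((div_le_one hy).mpr hy1)]
  · have hlin : -1 / (2 * y) + 1 / 4 = 1 / y / 2 + 1 / 4 - 1 / y := by ring
    rw [hH2 y hy hy1]
    linarith [Real.log_one_add_lt_half_add_quarter ((one_le_div hy).mpr hy1)]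
end

section
/- Let n ≥ 1, δ = -1/(2n+1), c = (1 - δ²)/4, v₁ = -2/(1+δ), v₂ = -2/(1-δ), and define H(x,y) = y·(1 - x y/v₁)^n / (1 - x y/v₂)^{n+1}. Then H is a first integral of the Abel equation y' = c x y³ + y²: at every point (x,y) with 1 - x y/v₂ ≠ 0, we have ∂H/∂x (x,y) + (c x y³ + y²)·∂H/∂y (x,y) = 0. -/
/-!
Write `H x y = y * g (x * y)`. Then
`∂ₓH + (c x y³ + y²) ∂ᵧH = y² ((1 + s + c s²) g'(s) + (1 + c s) g(s))` at `s = x y`,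
so `H` is a first integral as soon as `g` solves this linear ODE. With `α = (1 + δ)/2`,
`β = (1 - δ)/2` one has `1 - s/v₁ = 1 + α s`, `1 - s/v₂ = 1 + β s` and
`1 + s + c s² = (1 + α s)(1 + β s)`, and `g = (1 + α s)ⁿ / (1 + β s)ⁿ⁺¹` has logarithmic
derivative `n α / (1 + α s) - (n + 1) β / (1 + β s)`; the relation `(2n + 1) δ = -1` makes this
equal to `-(1 + c s) / (1 + s + c s²)`.
-/

section FirstIntegral

variable {𝕜 : Type*} [NontriviallyNormedField 𝕜] {g : 𝕜 → 𝕜} {g' x y : 𝕜}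

theorem HasDerivAt.const_mul_comp_mul_const (hg : HasDerivAt g g' (x * y)) :
    HasDerivAt (fun x' => y * g (x' * y)) (y ^ 2 * g') x := by
  refine ((hg.comp x ((hasDerivAt_id x).mul_const y)).const_mul y).congr_deriv ?_
  simp only [one_mul]
  ring

theorem HasDerivAt.id_mul_comp_const_mul (hg : HasDerivAt g g' (x * y)) :
    HasDerivAt (fun y' => y' * g (x * y')) (g (x * y) + x * y * g') y := by
  refine ((hasDerivAt_id y).mul (hg.comp y ((hasDerivAt_id y).const_mul x))).congr_deriv ?_
  simp only [id, one_mul, mul_one, Function.comp_apply]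
  ring

theorem first_integral_of_hasDerivAt (c : 𝕜) (hg : HasDerivAt g g' (x * y))
    (hode : (1 + x * y + c * (x * y) ^ 2) * g' + (1 + c * (x * y)) * g (x * y) = 0) :
    deriv (fun x' => y * g (x' * y)) x
      + (c * x * y ^ 3 + y ^ 2) * deriv (fun y' => y' * g (x * y')) y = 0 := by
  rw [hg.const_mul_comp_mul_const.deriv, hg.id_mul_comp_const_mul.deriv]
  linear_combination y ^ 2 * hode

end FirstIntegral

section PowDivPow

variable {𝕜 : Type*} [NontriviallyNormedField 𝕜] (n : ℕ) {α β s : 𝕜}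

theorem hasDerivAt_one_add_mul_pow_div_pow (hb : 1 + β * s ≠ 0) :
    HasDerivAt (fun t => (1 + α * t) ^ n / (1 + β * t) ^ (n + 1))
      ((n * α * (1 + α * s) ^ (n - 1) * (1 + β * s) - (n + 1) * β * (1 + α * s) ^ n)
        / (1 + β * s) ^ (n + 2)) s := by
  have hA : HasDerivAt (fun t => 1 + α * t) α s := by
    simpa using ((hasDerivAt_id s).const_mul α).const_add 1
  have hB : HasDerivAt (fun t => 1 + β * t) β s := by
    simpa using ((hasDerivAt_id s).const_mul β).const_add 1
  refine ((hA.fun_pow n).div (hB.fun_pow (n + 1)) (pow_ne_zero _ hb)).congr_deriv ?_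
  rw [Nat.add_sub_cancel,
    div_eq_div_iff (pow_ne_zero _ (pow_ne_zero _ hb)) (pow_ne_zero _ hb)]
  push_cast
  ring

theorem mul_mul_deriv_one_add_mul_pow_div_pow (hb : 1 + β * s ≠ 0) :
    (1 + α * s) * (1 + β * s) *
        ((n * α * (1 + α * s) ^ (n - 1) * (1 + β * s) - (n + 1) * β * (1 + α * s) ^ n)
          / (1 + β * s) ^ (n + 2))
      = (n * α * (1 + β * s) - (n + 1) * β * (1 + α * s))
        * ((1 + α * s) ^ n / (1 + β * s) ^ (n + 1)) := by
  have hpow : (n : 𝕜) * (1 + α * s) ^ (n - 1) * (1 + α * s) = n * (1 + α * s) ^ n := by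
    cases n <;> simp [pow_succ, mul_assoc]
  rw [pow_succ _ (n + 1), mul_div_assoc', mul_div_assoc',
    div_eq_div_iff (by simp [hb]) (by simp [hb])]
  linear_combination (α * (1 + β * s) ^ 2 * (1 + β * s) ^ (n + 1)) * hpow

theorem exists_hasDerivAt_one_add_mul_pow_div_pow_abel_ode [CharZero 𝕜] {δ c : 𝕜}
    (hδ : (2 * n + 1) * δ = -1) (hc : c = (1 - δ ^ 2) / 4) (hb : 1 + (1 - δ) / 2 * s ≠ 0) :
    ∃ g', HasDerivAt (fun t => (1 + (1 + δ) / 2 * t) ^ n / (1 + (1 - δ) / 2 * t) ^ (n + 1)) g' s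
      ∧ (1 + s + c * s ^ 2) * g'
        + (1 + c * s) * ((1 + (1 + δ) / 2 * s) ^ n / (1 + (1 - δ) / 2 * s) ^ (n + 1)) = 0 := by
  refine ⟨_, hasDerivAt_one_add_mul_pow_div_pow n hb, ?_⟩
  have hfactor : 1 + s + c * s ^ 2 = (1 + (1 + δ) / 2 * s) * (1 + (1 - δ) / 2 * s) := by
    rw [hc]; ring
  have hlog : n * ((1 + δ) / 2) * (1 + (1 - δ) / 2 * s)
      - (n + 1) * ((1 - δ) / 2) * (1 + (1 + δ) / 2 * s) = -(1 + c * s) := by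
    rw [hc]; linear_combination hδ / 2
  rw [hfactor, mul_mul_deriv_one_add_mul_pow_div_pow n hb, hlog]
  ring

end PowDivPow

theorem one_sub_div_neg_two_div {𝕜 : Type*} [Field 𝕜] [CharZero 𝕜] (e s : 𝕜) :
    1 - s / (-2 / e) = 1 + e / 2 * s := by
  rw [div_div_eq_mul_div]
  ring

theorem first_integral_abel_general (n : ℕ) (δ c v₁ v₂ : ℂ)
    (hδ : δ = -1/(2*n+1)) (hc : c = (1 - δ^2)/4)
    (hv₁ : v₁ = -2/(1+δ)) (hv₂ : v₂ = -2/(1-δ))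
    (H : ℂ → ℂ → ℂ)
    (hH : ∀ x y : ℂ, H x y = y*(1 - x*y/v₁)^n / (1 - x*y/v₂)^(n+1)) :
    ∀ x y : ℂ, 1 - x*y/v₂ ≠ 0 →
      deriv (fun x' => H x' y) x + (c*x*y^3 + y^2) * deriv (fun y' => H x y') y = 0 := by
  intro x y hb
  simp only [hH, hv₁, hv₂, one_sub_div_neg_two_div] at hb ⊢
  have hδ' : (2 * n + 1) * δ = -1 := by
    rw [hδ, mul_div_cancel₀ _ (by exact_mod_cast Nat.succ_ne_zero (2 * n))]
  obtain ⟨g', hg, hode⟩ := exists_hasDerivAt_one_add_mul_pow_div_pow_abel_ode n hδ' hc hb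
  simpa only [mul_div_assoc, mul_assoc] using first_integral_of_hasDerivAt c hg hode

theorem first_integral_abel (n : ℕ) (hn : 1 ≤ n) (δ c v₁ v₂ : ℂ)
    (hδ : δ = -1/(2*n+1)) (hc : c = (1 - δ^2)/4)
    (hv₁ : v₁ = -2/(1+δ)) (hv₂ : v₂ = -2/(1-δ))
    (H : ℂ → ℂ → ℂ)
    (hH : ∀ x y : ℂ, H x y = y*(1 - x*y/v₁)^n / (1 - x*y/v₂)^(n+1)) :
    ∀ x y : ℂ, 1 - x*y/v₂ ≠ 0 →
      deriv (fun x' => H x' y) x + (c*x*y^3 + y^2) * deriv (fun y' => H x y') y = 0 :=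
  first_integral_abel_general n δ c v₁ v₂ hδ hc hv₁ hv₂ H hH
end

section
/- With the notation of the first integral H(x,y) = y·(1 - x y/v₁)^n/(1 - x y/v₂)^{n+1} (n ≥ 2, v₁ = -(2n+1)/n, v₂ = -(2n+1)/(n+1)): if (x,y) is a point with 1 - x y/v₂ ≠ 0 and ∂H/∂y (x,y) = 0, then x y = v₁, i.e. the point lies on the hyperbola {(x,y) : x y = v₁}. In particular all critical points of H lie on this hyperbola. -/
/-! The numerator of `∂H/∂y` factors as `(1 - xy/v₁)^(n-1) (1 - xy/v₂)^n` times
`1 + xy (n/v₂ - (n+1)/v₁)`, the quadratic terms cancelling for every choice of `v₁, v₂`.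
For the given `v₁, v₂` the linear coefficient vanishes as well, so `∂H/∂y` is
`(1 - xy/v₁)^(n-1) / (1 - xy/v₂)^(n+2)`, which can vanish only where `xy = v₁`. -/

theorem hasDerivAt_mul_one_sub_pow_div_one_sub_pow {𝕜 : Type*} [NontriviallyNormedField 𝕜]
    (a b y : 𝕜) (n : ℕ) (hb : 1 - b * y ≠ 0) :
    HasDerivAt (fun t => t * (1 - a * t) ^ (n + 1) / (1 - b * t) ^ (n + 2))
      ((1 - a * y) ^ n * (1 + ((n + 1) * b - (n + 2) * a) * y) / (1 - b * y) ^ (n + 3)) y := by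
  have hA : HasDerivAt (fun t => 1 - a * t) (-a) y := by
    simpa using ((hasDerivAt_id y).const_mul a).const_sub 1
  have hB : HasDerivAt (fun t => 1 - b * t) (-b) y := by
    simpa using ((hasDerivAt_id y).const_mul b).const_sub 1
  refine (((hasDerivAt_id' y).mul (hA.pow (n + 1))).div (hB.pow (n + 2))
    (pow_ne_zero _ hb)).congr_deriv ?_
  simp only [Pi.pow_apply, Pi.mul_apply, Nat.add_sub_cancel]
  rw [div_eq_div_iff (pow_ne_zero _ (pow_ne_zero _ hb)) (pow_ne_zero _ hb)]
  push_cast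
  ring

theorem nat_div_eq_succ_div {K : Type*} [Field K] (n : ℕ) :
    (n : K) / (-(2 * n + 1) / (n + 1)) = (n + 1) / (-(2 * n + 1) / n) := by
  rw [div_div_eq_mul_div, div_div_eq_mul_div, mul_comm]

theorem critical_points_on_hyperbola (n : ℕ) (hn : 2 ≤ n) (v₁ v₂ : ℂ)
    (hv₁ : v₁ = -((2*n+1) : ℂ)/n) (hv₂ : v₂ = -((2*n+1) : ℂ)/(n+1))
    (H : ℂ → ℂ → ℂ)
    (hH : ∀ x y : ℂ, H x y = y*(1 - x*y/v₁)^n / (1 - x*y/v₂)^(n+1)) :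
    ∀ x y : ℂ, 1 - x*y/v₂ ≠ 0 → deriv (fun y' => H x y') y = 0 → x*y = v₁ := by
  intro x y hB hD
  obtain ⟨m, rfl⟩ : ∃ m, n = m + 1 := ⟨n - 1, by omega⟩
  have hlin : ((m : ℂ) + 1) * (x / v₂) - (m + 2) * (x / v₁) = 0 := by
    have := nat_div_eq_succ_div (K := ℂ) (m + 1)
    rw [← hv₁, ← hv₂] at this
    push_cast at this
    linear_combination x * this
  simp_rw [mul_div_right_comm x] at hB
  have hderiv := hasDerivAt_mul_one_sub_pow_div_one_sub_pow (x / v₁) (x / v₂) y m hB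
  simp_rw [hlin, zero_mul, add_zero, mul_one] at hderiv
  have hHx : (fun y' => H x y') =
      fun t => t * (1 - x / v₁ * t) ^ (m + 1) / (1 - x / v₂ * t) ^ (m + 2) := by
    funext t
    rw [hH, mul_div_right_comm x, mul_div_right_comm x]
  rw [hHx, hderiv.deriv, div_eq_zero_iff, or_iff_left (pow_ne_zero _ hB)] at hD
  have hA : 1 - x * y / v₁ = 0 := by
    rw [mul_div_right_comm]
    exact eq_zero_of_pow_eq_zero hD
  exact eq_of_div_eq_one (sub_eq_zero.mp hA).symm
end

section
/- Define G(x,y) = (y/(x y + 2)) · exp(2/(x y + 2)) for x y + 2 ≠ 0. Then G is a first integral of the Abel equation y' = (1/4) x y³ + y²: at every point (x,y) with x y + 2 ≠ 0, ∂G/∂x (x,y) + ((1/4) x y³ + y²)·∂G/∂y (x,y) = 0. -/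
/-!
Writing `t = x y`, the first integral has the shape `G(x, y) = y k(t)` with profile
`k(t) = exp (2 / (t + 2)) / (t + 2)`. For such a `G` the chain rule gives
`∂ₓG + (x y³ / 4 + y²) ∂ᵧG = (y² / 4) ((t + 2)² k'(t) + (t + 4) k(t))`,
and the profile solves the linear equation `(t + 2)² k' = -(t + 4) k`.
-/

open Complex

noncomputable def abelProfile (t : ℂ) : ℂ := exp (2 / (t + 2)) / (t + 2)

theorem hasDerivAt_abelProfile {t : ℂ} (ht : t + 2 ≠ 0) :
    HasDerivAt abelProfile (-(t + 4) / (t + 2) ^ 2 * abelProfile t) t := by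
  have hs : HasDerivAt (fun t : ℂ => t + 2) 1 t := (hasDerivAt_id t).add_const 2
  have he := ((hasDerivAt_const t (2 : ℂ)).div hs ht).cexp
  refine (he.div hs ht).congr_deriv ?_
  simp only [abelProfile, Pi.div_apply]
  field_simp
  ring

theorem abelProfile_ode {t : ℂ} (ht : t + 2 ≠ 0) :
    (t + 2) ^ 2 * deriv abelProfile t = -(t + 4) * abelProfile t := by
  rw [(hasDerivAt_abelProfile ht).deriv]
  field_simp

section ScalingForm

variable {𝕜 : Type*} [NontriviallyNormedField 𝕜] {k : 𝕜 → 𝕜} {k' x y : 𝕜}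

theorem HasDerivAt.mul_comp_mul_right (hk : HasDerivAt k k' (x * y)) :
    HasDerivAt (fun x' => y * k (x' * y)) (y ^ 2 * k') x := by
  have hin : HasDerivAt (fun x' => x' * y) y x := by simpa using (hasDerivAt_id x).mul_const y
  refine ((hk.comp x hin).const_mul y).congr_deriv ?_
  ring

theorem HasDerivAt.mul_comp_mul_left (hk : HasDerivAt k k' (x * y)) :
    HasDerivAt (fun y' => y' * k (x * y')) (k (x * y) + x * y * k') y := by
  have hin : HasDerivAt (fun y' => x * y') x y := by simpa using (hasDerivAt_id y).const_mul x
  refine ((hasDerivAt_id' y).mul (hk.comp y hin)).congr_deriv ?_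
  simp only [Function.comp_apply]
  ring

end ScalingForm

theorem first_integral_discriminant_case (G : ℂ → ℂ → ℂ)
    (hG : ∀ x y : ℂ, x*y + 2 ≠ 0 →
      G x y = (y/(x*y + 2)) * Complex.exp (2/(x*y + 2))) :
    ∀ x y : ℂ, x*y + 2 ≠ 0 →
      deriv (fun x' => G x' y) x + ((1/4)*x*y^3 + y^2) * deriv (fun y' => G x y') y = 0 := by
  intro x y hxy
  have hG_eq : ∀ a b : ℂ, a * b + 2 ≠ 0 → b * abelProfile (a * b) = G a b := fun a b hab => by
    rw [hG a b hab, abelProfile]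
    ring
  have hk := (hasDerivAt_abelProfile hxy).differentiableAt.hasDerivAt
  have hx : HasDerivAt (fun x' => G x' y) _ x := hk.mul_comp_mul_right.congr_of_eventuallyEq <|
    (((continuous_id.mul continuous_const).add continuous_const).continuousAt.eventually_ne
      hxy).mono fun x' hx' => (hG_eq x' y hx').symm
  have hy : HasDerivAt (fun y' => G x y') _ y := hk.mul_comp_mul_left.congr_of_eventuallyEq <|
    (((continuous_const.mul continuous_id).add continuous_const).continuousAt.eventually_ne
      hxy).mono fun y' hy' => (hG_eq x y' hy').symm
  rw [hx.deriv, hy.deriv]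
  linear_combination (y ^ 2 / 4) * abelProfile_ode hxy
end

section
/- For every natural number n, the function F(y) = 1 + log(-sin(y)/y) + y/tan(y), defined for y ∈ ((2n+1)π, (2n+2)π) (where sin y < 0 so the logarithm is defined), tends to +∞ as y → ((2n+1)π)⁺ and to -∞ as y → ((2n+2)π)⁻. Consequently, F has at least one zero in the interval ((2n+1)π, (2n+2)π). -/
/-!
Write `s = -sin y`, which tends to `0⁺` at both ends of the interval. Near `(2n+1)π` we have
`F y = 1 - log y + log s + (-y cos y) / s` with `-y cos y → (2n+1)π > 0`, and the pole `1 / s`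
beats `log s`, so `F → +∞`. Near `(2n+2)π` we have `y cos y → (2n+2)π > 0`, so both `log s`
and `y cos y / sin y = -(y cos y) / s` tend to `-∞`. The intermediate value theorem then gives
the zero.
-/

open Real Filter Topology Set

theorem tendsto_log_add_div_atTop {α : Type*} {l : Filter α} {f g : α → ℝ} {c : ℝ}
    (hf : Tendsto f l (𝓝[>] 0)) (hg : Tendsto g l (𝓝 c)) (hc : 0 < c) :
    Tendsto (fun x => log (f x) + g x / f x) l atTop := by
  -- `log f + g / f = (f log f + g) / f` and `f log f → 0`
  have hnum : Tendsto (fun x => f x * log (f x) + g x) l (𝓝 c) := by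
    simpa using
      ((continuous_mul_log.tendsto 0).comp (tendsto_nhds_of_tendsto_nhdsWithin hf)).add hg
  refine (hnum.pos_mul_atTop hc (tendsto_inv_nhdsGT_zero.comp hf)).congr' ?_
  filter_upwards [hf self_mem_nhdsWithin] with x (hx : 0 < f x)
  simp only [Function.comp_apply]
  field_simp

theorem exists_eq_zero_of_tendsto_atTop_atBot {f : ℝ → ℝ} {a b : ℝ} (hab : a < b)
    (hf : ContinuousOn f (Ioo a b)) (ha : Tendsto f (𝓝[>] a) atTop)
    (hb : Tendsto f (𝓝[<] b) atBot) : ∃ y ∈ Ioo a b, f y = 0 := by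
  obtain ⟨y₁, hfy₁, hy₁⟩ := ((ha.eventually_ge_atTop 0).and (Ioo_mem_nhdsGT hab)).exists
  obtain ⟨y₂, hfy₂, hy₂⟩ := ((hb.eventually_le_atBot 0).and (Ioo_mem_nhdsLT hab)).exists
  exact isPreconnected_Ioo.intermediate_value hy₂ hy₁ hf ⟨hfy₂, hfy₁⟩

theorem tendsto_neg_sin_nhdsGT_zero {l : Filter ℝ} {x : ℝ} (hl : l ≤ 𝓝 x) (hx : sin x = 0)
    (hneg : ∀ᶠ y in l, sin y < 0) : Tendsto (fun y => -sin y) l (𝓝[>] 0) := by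
  have hcont := (continuous_sin.tendsto x).neg
  rw [hx, neg_zero] at hcont
  exact tendsto_nhdsWithin_of_tendsto_nhds_of_eventually_within _ (hcont.mono_left hl)
    (hneg.mono fun y hy => neg_pos.2 hy)

noncomputable def logSincCot (y : ℝ) : ℝ := 1 + log (-sin y / y) + y * cos y / sin y

theorem continuousAt_logSincCot {y : ℝ} (hy : sin y ≠ 0) : ContinuousAt logSincCot y := by
  have hy0 : y ≠ 0 := by rintro rfl; simp at hy
  unfold logSincCot
  fun_prop (disch := first | assumption | exact div_ne_zero (neg_ne_zero.2 hy) hy0)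

section OddEvenMulPi

variable (n : ℕ)

theorem sin_neg_of_mem_Ioo {y : ℝ} (hy : y ∈ Ioo ((2 * n + 1) * π) ((2 * n + 2) * π)) :
    sin y < 0 := by
  rw [← sin_sub_nat_mul_two_pi y (n + 1)]
  push_cast
  exact sin_neg_of_neg_of_neg_pi_lt (by linarith [hy.2]) (by linarith [hy.1])

theorem odd_mul_pi_lt_even_mul_pi : (2 * n + 1) * π < (2 * n + 2) * π := by
  nlinarith [pi_pos]

theorem tendsto_logSincCot_nhdsGT_odd_mul_pi :
    Tendsto logSincCot (𝓝[>] ((2 * n + 1) * π)) atTop := by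
  have hsin : sin ((2 * n + 1) * π) = 0 := by exact_mod_cast sin_nat_mul_pi (2 * n + 1)
  have hcos : cos ((2 * n + 1) * π) = -1 := by
    exact_mod_cast (cos_nat_mul_pi (2 * n + 1)).trans (Odd.neg_one_pow ⟨n, rfl⟩)
  set a := (2 * n + 1) * π
  have ha : 0 < a := by positivity
  have hIoo := Ioo_mem_nhdsGT (odd_mul_pi_lt_even_mul_pi n)
  have hnegsin : Tendsto (fun y => -sin y) (𝓝[>] a) (𝓝[>] 0) :=
    tendsto_neg_sin_nhdsGT_zero nhdsWithin_le_nhds hsin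
      (mem_of_superset hIoo fun y hy => sin_neg_of_mem_Ioo n hy)
  have hlog : Tendsto (fun y => 1 - log y) (𝓝[>] a) (𝓝 (1 - log a)) :=
    ((continuousAt_log ha.ne').tendsto.const_sub 1).mono_left nhdsWithin_le_nhds
  have hycos : Tendsto (fun y => y * -cos y) (𝓝[>] a) (𝓝 a) :=
    ((by fun_prop : Continuous fun y => y * -cos y).tendsto' a a (by simp [hcos])).mono_left
      nhdsWithin_le_nhds
  refine (hlog.add_atTop
    (tendsto_log_add_div_atTop hnegsin hycos ha)).congr' ?_
  filter_upwards [hIoo] with y hy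
  have hsin := sin_neg_of_mem_Ioo n hy
  have hy0 : 0 < y := ha.trans hy.1
  rw [logSincCot, log_div (neg_ne_zero.2 hsin.ne) hy0.ne', mul_neg, neg_div_neg_eq]
  ring

theorem tendsto_logSincCot_nhdsLT_even_mul_pi :
    Tendsto logSincCot (𝓝[<] ((2 * n + 2) * π)) atBot := by
  have hsin : sin ((2 * n + 2) * π) = 0 := by exact_mod_cast sin_nat_mul_pi (2 * n + 2)
  have hcos : cos ((2 * n + 2) * π) = 1 := by
    exact_mod_cast (cos_nat_mul_pi (2 * n + 2)).trans (Even.neg_one_pow ⟨n + 1, by ring⟩)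
  set b := (2 * n + 2) * π
  have hb : 0 < b := by positivity
  have hIoo := Ioo_mem_nhdsLT (odd_mul_pi_lt_even_mul_pi n)
  have hnegsin : Tendsto (fun y => -sin y) (𝓝[<] b) (𝓝[>] 0) :=
    tendsto_neg_sin_nhdsGT_zero nhdsWithin_le_nhds hsin
      (mem_of_superset hIoo fun y hy => sin_neg_of_mem_Ioo n hy)
  have hlog : Tendsto (fun y => 1 - log y) (𝓝[<] b) (𝓝 (1 - log b)) :=
    ((continuousAt_log hb.ne').tendsto.const_sub 1).mono_left nhdsWithin_le_nhds
  have hycos : Tendsto (fun y => y * cos y) (𝓝[<] b) (𝓝 b) :=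
    ((by fun_prop : Continuous fun y => y * cos y).tendsto' b b (by simp [hcos])).mono_left
      nhdsWithin_le_nhds
  have hcot : Tendsto (fun y => -(y * cos y * (-sin y)⁻¹)) (𝓝[<] b) atBot :=
    tendsto_neg_atTop_atBot.comp (hycos.pos_mul_atTop hb (tendsto_inv_nhdsGT_zero.comp hnegsin))
  refine (hlog.add_atBot ((tendsto_log_nhdsGT_zero.comp hnegsin).atBot_add_atBot hcot)).congr' ?_
  filter_upwards [hIoo] with y hy
  have hsin := sin_neg_of_mem_Ioo n hy
  have hy0 : 0 < y := (by positivity : (0 : ℝ) < (2 * n + 1) * π).trans hy.1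
  rw [logSincCot, log_div (neg_ne_zero.2 hsin.ne) hy0.ne', inv_neg]
  simp only [Function.comp_apply]
  ring

end OddEvenMulPi

theorem F_zero_in_interval (n : ℕ) (F : ℝ → ℝ)
    (hF : ∀ y ∈ Set.Ioo ((2*n+1)*π) ((2*n+2)*π),
      F y = 1 + Real.log (-Real.sin y / y) + y * Real.cos y / Real.sin y) :
    Tendsto F (nhdsWithin ((2*n+1)*π) (Set.Ioo ((2*n+1)*π) ((2*n+2)*π))) atTop ∧
    Tendsto F (nhdsWithin ((2*n+2)*π) (Set.Ioo ((2*n+1)*π) ((2*n+2)*π))) atBot ∧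
    ∃ y ∈ Set.Ioo ((2*n+1)*π) ((2*n+2)*π), F y = 0 := by
  have hab := odd_mul_pi_lt_even_mul_pi n
  have hFeq : EqOn F logSincCot (Ioo ((2 * n + 1) * π) ((2 * n + 2) * π)) := fun y hy => hF y hy
  have htop : Tendsto F (𝓝[>] ((2 * n + 1) * π)) atTop :=
    (tendsto_logSincCot_nhdsGT_odd_mul_pi n).congr'
      (eventuallyEq_of_mem (Ioo_mem_nhdsGT hab) hFeq.symm)
  have hbot : Tendsto F (𝓝[<] ((2 * n + 2) * π)) atBot :=
    (tendsto_logSincCot_nhdsLT_even_mul_pi n).congr'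
      (eventuallyEq_of_mem (Ioo_mem_nhdsLT hab) hFeq.symm)
  have hcont : ContinuousOn F (Ioo ((2 * n + 1) * π) ((2 * n + 2) * π)) :=
    (continuousOn_of_forall_continuousAt fun y hy =>
      continuousAt_logSincCot (sin_neg_of_mem_Ioo n hy).ne).congr hFeq
  rw [nhdsWithin_Ioo_eq_nhdsGT hab, nhdsWithin_Ioo_eq_nhdsLT hab]
  exact ⟨htop, hbot, exists_eq_zero_of_tendsto_atTop_atBot hab hcont htop hbot⟩
end

section
/- Let y ∈ ℝ with sin y < 0, y > 0, and suppose 1 + log(-sin(y)/y) + y·cos(y)/sin(y) = 0. Set x = -log(-sin(y)/y) and ξ = x + i·y. Then 1 - ξ = exp(ξ). In particular, the equation 1 - ξ = e^ξ has infinitely many solutions ξ ∈ ℂ, with distinct solutions having imaginary parts in the disjoint intervals ((2n+1)π, (2n+2)π), n ∈ ℕ. -/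
/-!
Writing `ξ = x + iy`, the equation `1 - ξ = exp ξ` is the real system `1 - x = eˣ cos y`,
`-y = eˣ sin y`. When `sin y < 0 < y` the second equation forces `x = -log (-sin y / y)`, and the
first one becomes `reducedEquation y = 0`. On `[(2n+1)π + ε, (2n+1)π + π/2]` the sine is negative;
at the right end `reducedEquation y = 1 - log y < 0`, while `log u ≥ 1 - 1/u` bounds
`reducedEquation y` below by `2 + y (1 + cos y) / sin y = 2 - y tan ((y - (2n+1)π) / 2)`, which is
positive for small `ε`. The intermediate value theorem gives a zero in between.
-/

open Real

noncomputable def reducedEquation (y : ℝ) : ℝ :=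
  1 + log (-sin y / y) + y * cos y / sin y

theorem one_sub_eq_cexp_iff (x y : ℝ) :
    (1 : ℂ) - (x + Complex.I * y) = Complex.exp (x + Complex.I * y) ↔
      1 - x = exp x * cos y ∧ -y = exp x * sin y := by
  simp [Complex.ext_iff, Complex.exp_re, Complex.exp_im]

theorem one_sub_eq_cexp_of_reducedEquation_eq_zero {y : ℝ} (hs : sin y < 0) (hy : 0 < y)
    (h : reducedEquation y = 0) :
    (1 : ℂ) - (↑(-log (-sin y / y)) + Complex.I * y) =
      Complex.exp (↑(-log (-sin y / y)) + Complex.I * y) := by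
  have hexp : exp (-log (-sin y / y)) = -y / sin y := by
    rw [exp_neg, exp_log (div_pos (neg_pos.2 hs) hy), inv_div, div_neg, neg_div]
  rw [one_sub_eq_cexp_iff, hexp]
  unfold reducedEquation at h
  refine ⟨?_, (div_mul_cancel₀ _ hs.ne).symm⟩
  rw [show -y / sin y * cos y = -(y * cos y / sin y) by ring]
  linarith

theorem two_add_mul_one_add_cos_div_sin_le_reducedEquation {y : ℝ} (hs : sin y < 0)
    (hy : 0 < y) : 2 + y * (1 + cos y) / sin y ≤ reducedEquation y := by
  have hlog := one_sub_inv_le_log_of_pos (div_pos (neg_pos.2 hs) hy)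
  rw [inv_div, div_neg, sub_neg_eq_add] at hlog
  calc 2 + y * (1 + cos y) / sin y = 1 + (1 + y / sin y) + y * cos y / sin y := by ring
    _ ≤ reducedEquation y := by unfold reducedEquation; linarith

theorem continuousOn_reducedEquation : ContinuousOn reducedEquation {y | sin y < 0 ∧ 0 < y} := by
  intro y ⟨hs, hy⟩
  unfold reducedEquation
  have : -sin y / y ≠ 0 := (div_pos (neg_pos.2 hs) hy).ne'
  fun_prop (disch := first | exact hs.ne | exact hy.ne' | exact this)

theorem reducedEquation_neg_of_sin_eq_neg_one {y : ℝ} (hsin : sin y = -1) (hy : exp 1 < y) :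
    reducedEquation y < 0 := by
  have hcos : cos y = 0 := by
    nlinarith [sin_sq_add_cos_sq y]
  have hlog : 1 < log y := (lt_log_iff_exp_lt (exp_pos 1 |>.trans hy)).2 hy
  simp only [reducedEquation, hsin, hcos, neg_neg, one_div, log_inv, mul_zero, zero_div, add_zero]
  linarith

theorem sin_neg_of_mem_Ioo_odd_mul_pi {y : ℝ} (n : ℕ)
    (hy : y ∈ Set.Ioo ((2 * n + 1) * π) ((2 * n + 2) * π)) : sin y < 0 := by
  rw [← sin_sub_nat_mul_two_pi y (n + 1)]
  apply sin_neg_of_neg_of_neg_pi_lt <;> push_cast <;> linarith [hy.1, hy.2]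

theorem reducedEquation_add_inv_pos {a : ℝ} (ha : 1 < a) (hcos : cos a = -1) :
    0 < reducedEquation (a + a⁻¹) := by
  set t := a⁻¹
  have hsin_a : sin a = 0 := by nlinarith [sin_sq_add_cos_sq a]
  have ht : 0 < t := by positivity
  have ht1 : t < 1 := inv_lt_one_of_one_lt₀ ha
  have hat : a * t = 1 := mul_inv_cancel₀ (by positivity)
  have hsin : sin (a + t) = -sin t := by simp [sin_add, hsin_a, hcos]
  have hcos' : cos (a + t) = -cos t := by simp [cos_add, hsin_a, hcos]
  have hsin_pos : 0 < sin t := sin_pos_of_pos_of_lt_pi ht (by linarith [pi_gt_three])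
  have hsin_t : t - t ^ 3 / 6 < sin t := sin_gt_sub_cube ht
  have hcos_t : 1 - t ^ 2 / 2 ≤ cos t := one_sub_sq_div_two_le_cos
  -- near `a` we have `sin y ≈ 0` and `cos y ≈ -1`, so the lower bound is close to `2`
  have hsmall : (a + t) * (1 - cos t) / sin t < 2 := by
    have h1 : (a + t) * (1 - cos t) ≤ (a + t) * (t ^ 2 / 2) :=
      mul_le_mul_of_nonneg_left (by linarith) (by linarith)
    have h2 : (a + t) * (t ^ 2 / 2) = (t + t ^ 3) / 2 := by linear_combination t / 2 * hat
    have h3 : t ^ 3 < t := by nlinarith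
    rw [div_lt_iff₀ hsin_pos]
    linarith
  have hlow := two_add_mul_one_add_cos_div_sin_le_reducedEquation
    (y := a + t) (by rw [hsin]; linarith) (by linarith)
  rw [hsin, hcos', show (a + t) * (1 + -cos t) / -sin t = -((a + t) * (1 - cos t) / sin t) by
    ring] at hlow
  linarith

theorem exists_reducedEquation_eq_zero (n : ℕ) :
    ∃ y ∈ Set.Ioo ((2 * n + 1) * π) ((2 * n + 2) * π), reducedEquation y = 0 := by
  set a := (2 * (n : ℝ) + 1) * π
  have ha : 3 < a := by nlinarith [pi_gt_three, (n.cast_nonneg : (0 : ℝ) ≤ n)]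
  have hcos : cos a = -1 := by
    rw [show a = n * (2 * π) + π by ring, cos_nat_mul_two_pi_add_pi]
  have hinv : a⁻¹ < 1 := inv_lt_one_of_one_lt₀ (by linarith)
  have hsub : Set.Icc (a + a⁻¹) (a + π / 2) ⊆ Set.Ioo ((2 * n + 1) * π) ((2 * n + 2) * π) := by
    intro y hy
    have : 0 < a⁻¹ := by positivity
    constructor <;> linarith [hy.1, hy.2, pi_pos]
  have hpos : 0 < reducedEquation (a + a⁻¹) := reducedEquation_add_inv_pos (by linarith) hcos
  have hneg : reducedEquation (a + π / 2) < 0 :=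
    reducedEquation_neg_of_sin_eq_neg_one (by rw [sin_add_pi_div_two, hcos])
      (by linarith [exp_one_lt_d9, pi_gt_three])
  have hcont : ContinuousOn reducedEquation (Set.Icc (a + a⁻¹) (a + π / 2)) :=
    continuousOn_reducedEquation.mono fun y hy =>
      ⟨sin_neg_of_mem_Ioo_odd_mul_pi n (hsub hy), by linarith [(hsub hy).1]⟩
  have hle : a + a⁻¹ ≤ a + π / 2 := by linarith [pi_gt_three]
  obtain ⟨y, hy, hy0⟩ := intermediate_value_Icc' hle hcont ⟨hneg.le, hpos.le⟩
  exact ⟨y, hsub hy, hy0⟩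

theorem transcendental_equation_solutions :
    (∀ y : ℝ, Real.sin y < 0 → 0 < y →
      1 + Real.log (-Real.sin y / y) + y * Real.cos y / Real.sin y = 0 →
      (1 : ℂ) - (↑(-Real.log (-Real.sin y / y)) + Complex.I * y) =
        Complex.exp (↑(-Real.log (-Real.sin y / y)) + Complex.I * y)) ∧
    (∀ n : ℕ, ∃ ξ : ℂ, (1 : ℂ) - ξ = Complex.exp ξ ∧
      ξ.im ∈ Set.Ioo ((2*n+1)*π) ((2*n+2)*π)) := by
  refine ⟨fun y => one_sub_eq_cexp_of_reducedEquation_eq_zero, fun n => ?_⟩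
  obtain ⟨y, hy, hy0⟩ := exists_reducedEquation_eq_zero n
  have hy_pos : 0 < y := lt_trans (by positivity) hy.1
  exact ⟨_, one_sub_eq_cexp_of_reducedEquation_eq_zero
    (sin_neg_of_mem_Ioo_odd_mul_pi n hy) hy_pos hy0, by simpa using hy⟩
end
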